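/- Let M be an orthogonal matroid. Two distinct circuits C₁, C₂ of M are 2-modular (i.e., there exist transversals T₁, T₂ with T_i carrying C_i and |T₁ ∩ T₂*| ≤ 2) if and only if they form a modular pair (i.e., there exist a basis B and distinct e₁, e₂ ∉ B with C_i = FC(B, e_i)). -/
import Mathlib


/-- The ground set `[n] ∪ [n]*`: the element `i ∈ [n]` is `(i, false)` and its
starred copy `i*` is `(i, true)`. -/
abbrev GroundSet (n : ℕ) := Fin n × Bool

/-- The involution `x ↦ x*`. -/
def st {n : ℕ} (x : GroundSet n) : GroundSet n := (x.1, !x.2)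

/-- The skew pair `{x, x*}`. -/
def skw {n : ℕ} (x : GroundSet n) : Finset (GroundSet n) := {x, st x}

/-- The skew pair `{i, i*}` of an index `i ∈ [n]`. -/
def pr {n : ℕ} (i : Fin n) : Finset (GroundSet n) := {(i, false), (i, true)}

/-- A transversal: a subset of `[n] ∪ [n]*` containing exactly one of `i`, `i*`
for each `i ∈ [n]`. -/
def IsTransversal {n : ℕ} (T : Finset (GroundSet n)) : Prop :=
  ∀ i : Fin n, ((i, false) ∈ T ↔ (i, true) ∉ T)

/-- An orthogonal matroid on `[n] ∪ [n]*`: a nonempty collection of transversals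
satisfying the strong exchange axiom. -/
def IsOrthogonalMatroid {n : ℕ} (𝓑 : Finset (Finset (GroundSet n))) : Prop :=
  𝓑.Nonempty ∧ (∀ B ∈ 𝓑, IsTransversal B) ∧
  ∀ B₁ ∈ 𝓑, ∀ B₂ ∈ 𝓑, ∀ x ∈ symmDiff B₁ B₂,
    ∃ y ∈ (symmDiff B₁ B₂) \ skw x,
      symmDiff B₁ (skw x ∪ skw y) ∈ 𝓑 ∧ symmDiff B₂ (skw x ∪ skw y) ∈ 𝓑

/-- A subtransversal: a subset of a transversal, i.e. a set containing no full
skew pair. -/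
def IsSubtransversal {n : ℕ} (C : Finset (GroundSet n)) : Prop :=
  ∀ i : Fin n, ¬((i, false) ∈ C ∧ (i, true) ∈ C)

/-- A circuit of the collection `𝓑`: a minimal subtransversal not contained in
any member of `𝓑`. -/
def IsCircuit {n : ℕ} (𝓑 : Finset (Finset (GroundSet n)))
    (C : Finset (GroundSet n)) : Prop :=
  IsSubtransversal C ∧ (∀ B ∈ 𝓑, ¬ C ⊆ B) ∧
  (∀ C' ⊂ C, ∃ B ∈ 𝓑, C' ⊆ B)

/-- A transversal `T` carries a circuit `C` if `C ⊆ T` and `T △ {x,x*}` is a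
basis for each `x ∈ C`. -/
def Carries {n : ℕ} (𝓑 : Finset (Finset (GroundSet n)))
    (T C : Finset (GroundSet n)) : Prop :=
  C ⊆ T ∧ ∀ x ∈ C, symmDiff T (skw x) ∈ 𝓑

namespace OMAux
variable {n : ℕ}

@[simp] lemma st_st (x : GroundSet n) : st (st x) = x := by cases x; simp [st]

@[simp] lemma st_fst (x : GroundSet n) : (st x).1 = x.1 := rfl

lemma mem_skw {x y : GroundSet n} : x ∈ skw y ↔ x.1 = y.1 := by
  obtain ⟨i, b⟩ := x; obtain ⟨j, c⟩ := y
  simp only [skw, st, Finset.mem_insert, Finset.mem_singleton, Prod.mk.injEq]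
  cases b <;> cases c <;> simp

lemma pair_eq {x y : GroundSet n} (h : x.1 = y.1) : x = y ∨ x = st y := by
  obtain ⟨i, b⟩ := x; obtain ⟨j, c⟩ := y
  simp only [st, Prod.mk.injEq]
  cases b <;> cases c <;> simp_all

lemma skw_eq {x y : GroundSet n} (h : x.1 = y.1) : skw x = skw y := by
  ext a; simp [mem_skw, h]

lemma st_mem_iff {T : Finset (GroundSet n)} (hT : IsTransversal T) (x : GroundSet n) :
    st x ∈ T ↔ x ∉ T := by
  obtain ⟨i, b⟩ := x
  have := hT i
  cases b <;> simp [st] <;> tauto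

lemma eq_of_idx {T : Finset (GroundSet n)} (hT : IsTransversal T) {x y : GroundSet n}
    (hx : x ∈ T) (hy : y ∈ T) (h : x.1 = y.1) : x = y := by
  rcases pair_eq h with rfl | rfl
  · rfl
  · rw [st_mem_iff hT] at hx; exact absurd hy hx

lemma mem_sd_of_ne {T : Finset (GroundSet n)} {e w : GroundSet n} (h : w.1 ≠ e.1) :
    w ∈ symmDiff T (skw e) ↔ w ∈ T := by
  have : w ∉ skw e := by simp [mem_skw, h]
  simp [Finset.mem_symmDiff, this]

lemma mem_sd_of_eq {T : Finset (GroundSet n)} {e w : GroundSet n} (h : w.1 = e.1) :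
    w ∈ symmDiff T (skw e) ↔ w ∉ T := by
  have : w ∈ skw e := by simp [mem_skw, h]
  by_cases hw : w ∈ T <;> simp [Finset.mem_symmDiff, this, hw]

lemma transversal_sd {T : Finset (GroundSet n)} (hT : IsTransversal T) (e : GroundSet n) :
    IsTransversal (symmDiff T (skw e)) := by
  intro i
  by_cases h : i = e.1
  · rw [mem_sd_of_eq (show ((i,false) : GroundSet n).1 = e.1 from h),
      mem_sd_of_eq (show ((i,true) : GroundSet n).1 = e.1 from h)]
    have := hT i; tauto
  · rw [mem_sd_of_ne (show ((i,false) : GroundSet n).1 ≠ e.1 from h),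
      mem_sd_of_ne (show ((i,true) : GroundSet n).1 ≠ e.1 from h)]
    exact hT i

lemma carry {𝓑 : Finset (Finset (GroundSet n))} (h : IsOrthogonalMatroid 𝓑)
    {B : Finset (GroundSet n)} (hB : B ∈ 𝓑)
    {e : GroundSet n} (he : e ∉ B) {C : Finset (GroundSet n)} (hC : IsCircuit 𝓑 C)
    (hsub : C ⊆ symmDiff B (skw e)) {x : GroundSet n} (hx : x ∈ C) :
    symmDiff (symmDiff B (skw e)) (skw x) ∈ 𝓑 := by
  obtain ⟨h𝓑ne, hTrans, hExch⟩ := h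
  have hBt : IsTransversal B := hTrans B hB
  have hTt : IsTransversal (symmDiff B (skw e)) := transversal_sd hBt e
  have heT : e ∈ symmDiff B (skw e) := (mem_sd_of_eq rfl).2 he
  by_cases hxe : x.1 = e.1
  · have hxeq : x = e := eq_of_idx hTt (hsub hx) heT hxe
    subst hxeq
    rw [symmDiff_symmDiff_cancel_right]
    exact hB
  · have hxB : x ∈ B := (mem_sd_of_ne hxe).1 (hsub hx)
    have hfne : (𝓑.filter (fun B'' => C.erase x ⊆ B'')).Nonempty := by
      obtain ⟨B', hB', hsub'⟩ := hC.2.2 (C.erase x) (Finset.erase_ssubset hx)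
      exact ⟨B', Finset.mem_filter.2 ⟨hB', hsub'⟩⟩
    obtain ⟨B'', hB''mem, hmin⟩ :=
      Finset.exists_min_image _ (fun B'' => (symmDiff B B'').card) hfne
    rw [Finset.mem_filter] at hB''mem
    obtain ⟨hB'', hCB''⟩ := hB''mem
    have hB''t := hTrans B'' hB''
    have hxB'' : x ∉ B'' := by
      intro hmem
      refine hC.2.1 B'' hB'' (fun c hc => ?_)
      by_cases hcx : c = x
      · subst hcx; exact hmem
      · exact hCB'' (Finset.mem_erase.2 ⟨hcx, hc⟩)
    have hxSD : x ∈ symmDiff B B'' := Finset.mem_symmDiff.2 (Or.inl ⟨hxB, hxB''⟩)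
    obtain ⟨y, hy, hBy, hB''y⟩ := hExch B hB B'' hB'' x hxSD
    rw [Finset.mem_sdiff] at hy
    obtain ⟨hySD, hynotskw⟩ := hy
    have hyx : y.1 ≠ x.1 := fun hh => hynotskw (mem_skw.2 hh)
    by_cases hcase : ∃ c ∈ C.erase x, c.1 = y.1
    · -- y is in the pair of e; the exchange basis is T ∆ skw x
      obtain ⟨c, hcmem, hcy⟩ := hcase
      rw [Finset.mem_erase] at hcmem
      obtain ⟨hcx, hcC⟩ := hcmem
      have hcB'' : c ∈ B'' := hCB'' (Finset.mem_erase.2 ⟨hcx, hcC⟩)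
      have hcB : c ∉ B := by
        rcases pair_eq (show y.1 = c.1 from hcy.symm) with h1 | h1
        · rcases Finset.mem_symmDiff.1 hySD with ⟨h2, h3⟩ | ⟨h2, h3⟩
          · exact absurd (h1 ▸ hcB'') (h1 ▸ h3)
          · exact h1 ▸ h3
        · subst h1
          rcases Finset.mem_symmDiff.1 hySD with ⟨h2, h3⟩ | ⟨h2, h3⟩
          · exact (st_mem_iff hBt c).1 h2
          · exact absurd hcB'' ((st_mem_iff hB''t c).1 h2)
      have hce1 : c.1 = e.1 := by
        by_contra hne
        exact hcB ((mem_sd_of_ne hne).1 (hsub hcC))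
      have hye : skw y = skw e := skw_eq (hcy.symm.trans hce1)
      have hdisj : Disjoint (skw x) (skw e) := by
        rw [Finset.disjoint_left]
        intro a ha hae
        exact hxe ((mem_skw.1 ha).symm.trans (mem_skw.1 hae)).symm.symm
      have : symmDiff B (skw x ∪ skw y) = symmDiff (symmDiff B (skw e)) (skw x) := by
        rw [hye, ← Finset.sup_eq_union, ← hdisj.symmDiff_eq_sup, ← symmDiff_assoc,
          symmDiff_right_comm]
      exact this ▸ hBy
    · -- contradiction with minimality
      push_neg at hcase
      have hskwsub : skw x ∪ skw y ⊆ symmDiff B B'' := by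
        intro a ha
        rcases Finset.mem_union.1 ha with ha | ha
        · rcases pair_eq (mem_skw.1 ha) with rfl | rfl
          · exact hxSD
          · exact Finset.mem_symmDiff.2 (Or.inr
              ⟨(st_mem_iff hB''t x).2 hxB'', fun hh => (st_mem_iff hBt x).1 hh hxB⟩)
        · rcases pair_eq (mem_skw.1 ha) with rfl | rfl
          · exact hySD
          · rcases Finset.mem_symmDiff.1 hySD with ⟨h2, h3⟩ | ⟨h2, h3⟩
            · exact Finset.mem_symmDiff.2 (Or.inr
                ⟨(st_mem_iff hB''t y).2 h3, fun hh => (st_mem_iff hBt y).1 hh h2⟩)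
            · exact Finset.mem_symmDiff.2 (Or.inl
                ⟨(st_mem_iff hBt y).2 h3, fun hh => (st_mem_iff hB''t y).1 hh h2⟩)
      have hsub₃ : C.erase x ⊆ symmDiff B'' (skw x ∪ skw y) := by
        intro c hc
        rw [Finset.mem_erase] at hc
        have hcT : c ∈ symmDiff B (skw e) := hsub hc.2
        have hcx1 : c.1 ≠ x.1 := fun hh => hc.1 (eq_of_idx hTt hcT (hsub hx) hh)
        have hcy1 : c.1 ≠ y.1 := hcase c (Finset.mem_erase.2 hc)
        have hns : c ∉ skw x ∪ skw y := by
          simp [Finset.mem_union, mem_skw, hcx1, hcy1]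
        exact Finset.mem_symmDiff.2 (Or.inl ⟨hCB'' (Finset.mem_erase.2 hc), hns⟩)
      have hmem₃ := hmin (symmDiff B'' (skw x ∪ skw y))
        (Finset.mem_filter.2 ⟨hB''y, hsub₃⟩)
      have key : symmDiff B (symmDiff B'' (skw x ∪ skw y)) =
          (symmDiff B B'') \ (skw x ∪ skw y) := by
        rw [← symmDiff_assoc]
        exact symmDiff_of_ge hskwsub
      have hlt : ((symmDiff B B'') \ (skw x ∪ skw y)).card < (symmDiff B B'').card :=
        Finset.card_lt_card (Finset.sdiff_ssubset hskwsub
          ⟨x, Finset.mem_union_left _ (mem_skw.2 rfl)⟩)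
      rw [key] at hmem₃
      omega



end OMAux

open OMAux

/-- Two distinct circuits `C₁, C₂` of an orthogonal matroid are 2-modular (there
are transversals `T₁, T₂` with `Tᵢ` carrying `Cᵢ` and `|T₁ ∩ T₂*| ≤ 2`) iff they
form a modular pair (there are a basis `B` and distinct `e₁, e₂ ∉ B` with
`Cᵢ = FC(B, eᵢ)`, i.e. `Cᵢ` is the circuit contained in `B △ {eᵢ, eᵢ*}`). -/
theorem two_modular_iff_modular {n : ℕ}
    (𝓑 : Finset (Finset (GroundSet n))) (h : IsOrthogonalMatroid 𝓑)
    (C₁ C₂ : Finset (GroundSet n))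
    (hC₁ : IsCircuit 𝓑 C₁) (hC₂ : IsCircuit 𝓑 C₂) (hne : C₁ ≠ C₂) :
    (∃ T₁ T₂ : Finset (GroundSet n), IsTransversal T₁ ∧ IsTransversal T₂ ∧
        Carries 𝓑 T₁ C₁ ∧ Carries 𝓑 T₂ C₂ ∧ (T₁ ∩ T₂.image st).card ≤ 2)
      ↔ (∃ B ∈ 𝓑, ∃ e₁ e₂ : GroundSet n, e₁ ∉ B ∧ e₂ ∉ B ∧ e₁ ≠ e₂ ∧
          C₁ ⊆ symmDiff B (skw e₁) ∧ C₂ ⊆ symmDiff B (skw e₂)) := by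
  constructor
  · rintro ⟨T₁, T₂, hT₁, hT₂, ⟨hsub₁, hcar₁⟩, ⟨hsub₂, hcar₂⟩, hcard⟩
    -- C₁ is not contained in T₂
    have hnotsub : ¬ C₁ ⊆ T₂ := by
      intro hsubT
      by_cases hcc : C₂ ⊆ C₁
      · obtain ⟨B', hB', hsB⟩ := hC₁.2.2 C₂
          (Finset.ssubset_iff_subset_ne.2 ⟨hcc, hne.symm⟩)
        exact hC₂.2.1 B' hB' hsB
      · obtain ⟨z, hzC₂, hzC₁⟩ := Finset.not_subset.1 hcc
        refine hC₁.2.1 _ (hcar₂ z hzC₂) ?_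
        intro w hw
        have hwT₂ : w ∈ T₂ := hsubT hw
        have hwz : w.1 ≠ z.1 := fun hh =>
          hzC₁ (eq_of_idx hT₂ hwT₂ (hsub₂ hzC₂) hh ▸ hw)
        exact (mem_sd_of_ne hwz).2 hwT₂
    obtain ⟨c₁, hc₁C, hc₁T₂⟩ := Finset.not_subset.1 hnotsub
    have hc₁T₁ : c₁ ∈ T₁ := hsub₁ hc₁C
    have hstc₁T₁ : st c₁ ∉ T₁ := fun hh => (st_mem_iff hT₁ c₁).1 hh hc₁T₁
    have hstc₁T₂ : st c₁ ∈ T₂ := (st_mem_iff hT₂ c₁).2 hc₁T₂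
    have hB : symmDiff T₁ (skw c₁) ∈ 𝓑 := hcar₁ c₁ hc₁C
    obtain ⟨c, hcC₂, hcB⟩ := Finset.not_subset.1 (hC₂.2.1 _ hB)
    have hcT₂ : c ∈ T₂ := hsub₂ hcC₂
    have hcc₁ : c.1 ≠ c₁.1 := by
      intro hh
      have h1 : c = st c₁ :=
        eq_of_idx hT₂ hcT₂ hstc₁T₂ (by simpa using hh)
      have h2 : st c₁ ∈ symmDiff T₁ (skw c₁) :=
        (mem_sd_of_eq (by simp)).2 hstc₁T₁
      exact hcB (h1 ▸ h2)
    have hcT₁ : c ∉ T₁ := fun hh => hcB ((mem_sd_of_ne hcc₁).2 hh)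
    refine ⟨symmDiff T₁ (skw c₁), hB, c₁, c,
      fun hh => (mem_sd_of_eq rfl).1 hh hc₁T₁, hcB,
      fun hh => hc₁T₂ (hh ▸ hcT₂), ?_, ?_⟩
    · rw [symmDiff_symmDiff_cancel_right]; exact hsub₁
    · intro w hw
      have hwT₂ : w ∈ T₂ := hsub₂ hw
      by_cases h1 : w.1 = c₁.1
      · have hw' : w = st c₁ := eq_of_idx hT₂ hwT₂ hstc₁T₂ (by simpa using h1)
        subst hw'
        have : st c₁ ∈ symmDiff T₁ (skw c₁) := (mem_sd_of_eq (by simp)).2 hstc₁T₁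
        exact (mem_sd_of_ne (by simpa using fun hh => hcc₁ hh.symm)).2 this
      · by_cases h2 : w.1 = c.1
        · have hw' : w = c := eq_of_idx hT₂ hwT₂ hcT₂ h2
          subst hw'
          exact (mem_sd_of_eq rfl).2 hcB
        · have hwT₁ : w ∈ T₁ := by
            by_contra hwn
            have m1 : c₁ ∈ T₁ ∩ T₂.image st :=
              Finset.mem_inter.2 ⟨hc₁T₁, Finset.mem_image.2 ⟨st c₁, hstc₁T₂, st_st c₁⟩⟩
            have m2 : st c ∈ T₁ ∩ T₂.image st :=
              Finset.mem_inter.2 ⟨(st_mem_iff hT₁ c).2 hcT₁,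
                Finset.mem_image.2 ⟨c, hcT₂, rfl⟩⟩
            have m3 : st w ∈ T₁ ∩ T₂.image st :=
              Finset.mem_inter.2 ⟨(st_mem_iff hT₁ w).2 hwn,
                Finset.mem_image.2 ⟨w, hwT₂, rfl⟩⟩
            have hsub3 : ({c₁, st c, st w} : Finset (GroundSet n)) ⊆ T₁ ∩ T₂.image st := by
              intro a ha
              rcases Finset.mem_insert.1 ha with rfl | ha
              · exact m1
              rcases Finset.mem_insert.1 ha with rfl | ha
              · exact m2
              · rw [Finset.mem_singleton.1 ha]; exact m3
            have hcard3 : ({c₁, st c, st w} : Finset (GroundSet n)).card = 3 := by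
              rw [Finset.card_insert_of_notMem, Finset.card_insert_of_notMem,
                Finset.card_singleton]
              · intro hh
                rw [Finset.mem_singleton] at hh
                have : c.1 = w.1 := by
                  have := congrArg Prod.fst hh; simpa using this
                exact h2 this.symm
              · intro hh
                rcases Finset.mem_insert.1 hh with hh | hh
                · have : c₁.1 = c.1 := by
                    have := congrArg Prod.fst hh; simpa using this
                  exact hcc₁ this.symm
                · rw [Finset.mem_singleton] at hh
                  have : c₁.1 = w.1 := by
                    have := congrArg Prod.fst hh; simpa using this
                  exact h1 this.symm
            have := Finset.card_le_card hsub3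
            rw [hcard3] at this
            omega
          exact (mem_sd_of_ne h2).2 ((mem_sd_of_ne h1).2 hwT₁)
  · rintro ⟨B, hB, e₁, e₂, he₁, he₂, hne12, hsb₁, hsb₂⟩
    have hBt : IsTransversal B := h.2.1 B hB
    have hidx : e₁.1 ≠ e₂.1 := by
      intro hh
      rcases pair_eq hh with rfl | rfl
      · exact hne12 rfl
      · exact he₁ ((st_mem_iff hBt e₂).2 he₂)
    refine ⟨symmDiff B (skw e₁), symmDiff B (skw e₂), transversal_sd hBt e₁,
      transversal_sd hBt e₂,
      ⟨hsb₁, fun x hx => carry h hB he₁ hC₁ hsb₁ hx⟩,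
      ⟨hsb₂, fun x hx => carry h hB he₂ hC₂ hsb₂ hx⟩, ?_⟩
    have hsubset : symmDiff B (skw e₁) ∩ (symmDiff B (skw e₂)).image st
        ⊆ {e₁, st e₂} := by
      intro w hw
      rw [Finset.mem_inter] at hw
      obtain ⟨hw₁, hw₂⟩ := hw
      have hstw : st w ∈ symmDiff B (skw e₂) := by
        obtain ⟨u, hu, huw⟩ := Finset.mem_image.1 hw₂
        rw [← huw, st_st]; exact hu
      have hT₁t := transversal_sd hBt e₁
      by_cases h1 : w.1 = e₁.1
      · have he₁T : e₁ ∈ symmDiff B (skw e₁) := (mem_sd_of_eq rfl).2 he₁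
        have : w = e₁ := eq_of_idx hT₁t hw₁ he₁T h1
        simp [this]
      · by_cases h2 : w.1 = e₂.1
        · have he₂T : e₂ ∈ symmDiff B (skw e₂) := (mem_sd_of_eq rfl).2 he₂
          have : st w = e₂ := eq_of_idx (transversal_sd hBt e₂) hstw he₂T (by simpa using h2)
          have hw' : w = st e₂ := by rw [← this, st_st]
          simp [hw']
        · exfalso
          have hwB : w ∈ B := (mem_sd_of_ne h1).1 hw₁
          have hstwB : st w ∈ B := (mem_sd_of_ne (by simpa using h2)).1 hstw
          exact (st_mem_iff hBt w).1 hstwB hwB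
    calc (symmDiff B (skw e₁) ∩ (symmDiff B (skw e₂)).image st).card
        ≤ ({e₁, st e₂} : Finset (GroundSet n)).card := Finset.card_le_card hsubset
      _ ≤ 2 := le_trans (Finset.card_insert_le _ _) (by simp)
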